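/- Let H : [0,π] → [0,π] be an increasing function such that H(π − θ) = π − H(θ) for all θ, H is superadditive (H(θ₁+θ₂) ≥ H(θ₁) + H(θ₂) whenever θ₁, θ₂, θ₁+θ₂ ∈ [0,π]), and for every convex function F : [0,π] → ℝ one has ∫₀^π F(H(θ)) sin θ dθ ≤ ∫₀^π F(θ) sin θ dθ. Then H(θ) = θ for all θ ∈ [0,π]. -/

import Mathlib

open Real Set MeasureTheory

/-! Jensen's inequality for the convex function `-sin` gives `∫₀^π (sin θ - sin (H θ)) sin θ ≤ 0`.
Since `2 (sin θ - sin x) sin θ = (1 - cos (x - θ)) + (cos (x + θ) - cos 2θ)`, it suffices that the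
second summand has nonnegative integral. By the symmetry of `H` about `π/2` this integral is twice
the one over `[0, π/2]`, and there pairing `θ` with `π/2 - θ` cancels the `cos 2θ` terms and leaves
`cos A + cos B` with `A, B ≥ 0` and, by superadditivity, `A + B ≤ π`. Hence
`∫₀^π (1 - cos (H θ - θ)) = 0`, so `H θ = θ` almost everywhere, and a monotone function that fixes
a dense set of points fixes every point. -/

lemma MonotoneOn.intervalIntegrable_comp {H : ℝ → ℝ} {a b : ℝ} (hab : a ≤ b)
    (hH : MonotoneOn H (Icc a b)) {φ : ℝ × ℝ → ℝ} (hφ : Continuous φ) :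
    IntervalIntegrable (fun θ => φ (H θ, θ)) volume a b := by
  rw [intervalIntegrable_iff_integrableOn_Icc_of_le hab]
  obtain ⟨C, hC⟩ := (isCompact_Icc.prod isCompact_Icc).exists_bound_of_continuousOn
    (s := Icc (H a) (H b) ×ˢ Icc a b) hφ.continuousOn
  have hHm : AEMeasurable H (volume.restrict (Icc a b)) :=
    aemeasurable_restrict_of_monotoneOn measurableSet_Icc hH
  refine Integrable.of_bound
    (hφ.measurable.comp_aemeasurable (hHm.prodMk aemeasurable_id)).aestronglyMeasurable C
    (ae_restrict_of_forall_mem measurableSet_Icc fun θ hθ => hC (H θ, θ) ⟨⟨?_, ?_⟩, hθ⟩)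
  · exact hH (left_mem_Icc.2 hab) hθ hθ.1
  · exact hH hθ (right_mem_Icc.2 hab) hθ.2

lemma integral_eq_two_mul_integral_half_of_symm {f : ℝ → ℝ} {a b : ℝ} (hab : a ≤ b)
    (hf : IntervalIntegrable f volume a b) (hsymm : ∀ x ∈ Icc a b, f (a + b - x) = f x) :
    ∫ x in a..b, f x = 2 * ∫ x in a..(a + b) / 2, f x := by
  have hmid : (a + b) / 2 ∈ Icc a b := ⟨by linarith, by linarith⟩
  have hupper : ∫ x in (a + b) / 2..b, f x = ∫ x in a..(a + b) / 2, f x := by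
    have := intervalIntegral.integral_comp_sub_left f (a := a) (b := (a + b) / 2) (a + b)
    rw [show a + b - (a + b) / 2 = (a + b) / 2 by ring, add_sub_cancel_left] at this
    rw [← this]
    refine intervalIntegral.integral_congr fun x hx => hsymm x ?_
    rw [uIcc_of_le hmid.1] at hx
    exact ⟨hx.1, hx.2.trans hmid.2⟩
  rw [← intervalIntegral.integral_add_adjacent_intervals (hf.mono_set ?_) (hf.mono_set ?_), hupper]
  · ring
  · exact uIcc_subset_uIcc_left (mem_uIcc_of_le hmid.1 hmid.2)
  · exact uIcc_subset_uIcc_right (mem_uIcc_of_le hmid.1 hmid.2)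

lemma integral_nonneg_of_add_symm_nonneg {f : ℝ → ℝ} {a b : ℝ} (hab : a ≤ b)
    (hf : IntervalIntegrable f volume a b) (h : ∀ x ∈ Icc a b, 0 ≤ f x + f (a + b - x)) :
    0 ≤ ∫ x in a..b, f x := by
  have hrefl : ∫ x in a..b, f (a + b - x) = ∫ x in a..b, f x := by
    simp [intervalIntegral.integral_comp_sub_left]
  have := intervalIntegral.integral_nonneg (μ := volume) hab h
  rw [intervalIntegral.integral_add hf (by simpa using (hf.comp_sub_left (a + b)).symm),
    hrefl] at this
  linarith

lemma cos_add_cos_nonneg {x y : ℝ} (hx : 0 ≤ x) (hy : 0 ≤ y) (hxy : x + y ≤ π) :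
    0 ≤ cos x + cos y := by
  have := cos_le_cos_of_nonneg_of_le_pi hx (by linarith) (by linarith : x ≤ π - y)
  rw [cos_pi_sub] at this
  linarith

lemma two_mul_sin_sub_sin_mul_sin (x θ : ℝ) :
    2 * ((sin θ - sin x) * sin θ) = (1 - cos (x - θ)) + (cos (x + θ) - cos (2 * θ)) := by
  rw [cos_sub, cos_add, cos_two_mul]
  linear_combination 2 * sin_sq_add_cos_sq θ

lemma exists_mem_Ioo_of_ae_restrict_Ioc {p : ℝ → Prop} {a b u v : ℝ}
    (hp : ∀ᵐ t ∂volume.restrict (Ioc a b), p t) (hu : a ≤ u) (huv : u < v) (hv : v ≤ b) :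
    ∃ t ∈ Ioo u v, p t := by
  have : (ae (volume.restrict (Ioo u v))).NeBot := ae_restrict_neBot.2 (by simp [huv])
  have hsub : Ioo u v ⊆ Ioc a b := Ioo_subset_Ioc_self.trans (Ioc_subset_Ioc hu hv)
  obtain ⟨t, hmem, ht⟩ := ((ae_restrict_mem measurableSet_Ioo).and
    (ae_restrict_of_ae_restrict_of_subset hsub hp)).exists
  exact ⟨t, hmem, ht⟩

lemma MonotoneOn.eqOn_id_of_ae {H : ℝ → ℝ} {a b : ℝ} (hH : MonotoneOn H (Icc a b))
    (hae : ∀ᵐ t ∂volume.restrict (Ioc a b), H t = t) : EqOn H id (Ioo a b) := by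
  intro θ hθ
  rcases lt_trichotomy (H θ) θ with hlt | heq | hgt
  · obtain ⟨t, ⟨hHt, htθ⟩, hfix⟩ :=
      exists_mem_Ioo_of_ae_restrict_Ioc hae (le_max_left a (H θ)) (max_lt hθ.1 hlt) hθ.2.le
    have := hH ⟨(le_max_left _ _).trans hHt.le, htθ.le.trans hθ.2.le⟩ (Ioo_subset_Icc_self hθ)
      htθ.le
    linarith [le_max_right a (H θ)]
  · exact heq
  · obtain ⟨t, ⟨hθt, htH⟩, hfix⟩ :=
      exists_mem_Ioo_of_ae_restrict_Ioc hae hθ.1.le (lt_min hθ.2 hgt) (min_le_left b (H θ))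
    have := hH (Ioo_subset_Icc_self hθ) ⟨hθ.1.le.trans hθt.le, htH.le.trans (min_le_left _ _)⟩
      hθt.le
    linarith [min_le_right b (H θ)]

lemma ae_eq_of_integral_one_sub_cos_sub_eq_zero {H : ℝ → ℝ} {a b : ℝ} (hab : a ≤ b)
    (hint : IntervalIntegrable (fun θ => 1 - cos (H θ - θ)) volume a b)
    (hclose : ∀ θ ∈ Ioc a b, |H θ - θ| < 2 * π)
    (hzero : ∫ θ in a..b, (1 - cos (H θ - θ)) = 0) :
    ∀ᵐ θ ∂volume.restrict (Ioc a b), H θ = θ := by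
  have hnonneg : 0 ≤ᵐ[volume.restrict (Ioc a b)] fun θ => 1 - cos (H θ - θ) :=
    ae_of_all _ fun θ => sub_nonneg.2 (cos_le_one _)
  filter_upwards
    [(intervalIntegral.integral_eq_zero_iff_of_le_of_nonneg_ae hab hnonneg hint).1 hzero,
    ae_restrict_mem measurableSet_Ioc] with θ hθ hmem
  obtain ⟨hlo, hhi⟩ := abs_lt.1 (hclose θ hmem)
  simp only [Pi.zero_apply, sub_eq_zero] at hθ
  linarith [(cos_eq_one_iff_of_lt_of_lt hlo hhi).1 hθ.symm]

section

variable {H : ℝ → ℝ}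

lemma apply_zero_eq_zero_of_superadditive (hmaps : MapsTo H (Icc 0 π) (Icc 0 π))
    (hsuper : ∀ θ₁ θ₂ : ℝ, θ₁ ∈ Icc (0:ℝ) π → θ₂ ∈ Icc (0:ℝ) π →
      θ₁ + θ₂ ∈ Icc (0:ℝ) π → H θ₁ + H θ₂ ≤ H (θ₁ + θ₂)) : H 0 = 0 := by
  have h0 : (0:ℝ) ∈ Icc 0 π := left_mem_Icc.2 pi_pos.le
  have := hsuper 0 0 h0 h0 (by rwa [add_zero])
  rw [add_zero] at this
  linarith [(hmaps h0).1]

lemma apply_pi_div_two_of_symm (hsym : ∀ θ ∈ Icc (0:ℝ) π, H (π - θ) = π - H θ) :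
    H (π / 2) = π / 2 := by
  have := hsym (π / 2) ⟨by positivity, by linarith [pi_pos]⟩
  rw [show π - π / 2 = π / 2 by ring] at this
  linarith

lemma integral_one_sub_cos_add_integral_cos_sub_cos_nonpos (hmono : MonotoneOn H (Icc 0 π))
    (hjensen : ∀ F : ℝ → ℝ, ConvexOn ℝ (Icc 0 π) F →
      (∫ θ in (0:ℝ)..π, F (H θ) * sin θ) ≤ ∫ θ in (0:ℝ)..π, F θ * sin θ) :
    (∫ θ in (0:ℝ)..π, (1 - cos (H θ - θ))) +
      ∫ θ in (0:ℝ)..π, (cos (H θ + θ) - cos (2 * θ)) ≤ 0 := by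
  have hJ := hjensen (-sin) strictConcaveOn_sin_Icc.concaveOn.neg
  simp only [Pi.neg_apply] at hJ
  have hint {φ : ℝ × ℝ → ℝ} (hφ : Continuous φ) := hmono.intervalIntegrable_comp pi_pos.le hφ
  rw [← intervalIntegral.integral_add (hint (φ := fun p => 1 - cos (p.1 - p.2)) (by fun_prop))
    (hint (φ := fun p => cos (p.1 + p.2) - cos (2 * p.2)) (by fun_prop))]
  calc ∫ θ in (0:ℝ)..π, (1 - cos (H θ - θ) + (cos (H θ + θ) - cos (2 * θ)))
      = ∫ θ in (0:ℝ)..π, 2 * ((sin θ - sin (H θ)) * sin θ) :=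
        intervalIntegral.integral_congr fun θ _ => (two_mul_sin_sub_sin_mul_sin (H θ) θ).symm
    _ = 2 * ((∫ θ in (0:ℝ)..π, -sin (H θ) * sin θ) - ∫ θ in (0:ℝ)..π, -sin θ * sin θ) := by
        rw [intervalIntegral.integral_const_mul, ← intervalIntegral.integral_sub
          (hint (φ := fun p => -sin p.1 * sin p.2) (by fun_prop))
          (hint (φ := fun p => -sin p.2 * sin p.2) (by fun_prop))]
        congr 1
        exact intervalIntegral.integral_congr fun θ _ => by simp only; ring
    _ ≤ 0 := by linarith

lemma cos_add_sub_cos_two_mul_add_reflect_nonneg (hmaps : MapsTo H (Icc 0 π) (Icc 0 π))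
    (hsym : ∀ θ ∈ Icc (0:ℝ) π, H (π - θ) = π - H θ)
    (hsuper : ∀ θ₁ θ₂ : ℝ, θ₁ ∈ Icc (0:ℝ) π → θ₂ ∈ Icc (0:ℝ) π →
      θ₁ + θ₂ ∈ Icc (0:ℝ) π → H θ₁ + H θ₂ ≤ H (θ₁ + θ₂)) {θ : ℝ} (hθ : θ ∈ Icc 0 (π / 2)) :
    0 ≤ cos (H θ + θ) - cos (2 * θ) +
      (cos (H (π / 2 - θ) + (π / 2 - θ)) - cos (2 * (π / 2 - θ))) := by
  have hθ₁ : θ ∈ Icc 0 π := ⟨hθ.1, by linarith [hθ.2, pi_pos]⟩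
  have hθ₂ : π / 2 - θ ∈ Icc 0 π := ⟨by linarith [hθ.2], by linarith [hθ.1, pi_pos]⟩
  have hsum := hsuper θ (π / 2 - θ) hθ₁ hθ₂
    (by rw [add_sub_cancel]; exact ⟨by positivity, by linarith [pi_pos]⟩)
  rw [add_sub_cancel, apply_pi_div_two_of_symm hsym] at hsum
  have hcos := cos_add_cos_nonneg (x := H θ + θ) (y := H (π / 2 - θ) + (π / 2 - θ))
    (by linarith [(hmaps hθ₁).1, hθ.1]) (by linarith [(hmaps hθ₂).1, hθ₂.1]) (by linarith)
  rw [show 2 * (π / 2 - θ) = π - 2 * θ by ring, cos_pi_sub]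
  linarith

lemma integral_cos_add_sub_cos_two_mul_nonneg (hmaps : MapsTo H (Icc 0 π) (Icc 0 π))
    (hmono : MonotoneOn H (Icc 0 π)) (hsym : ∀ θ ∈ Icc (0:ℝ) π, H (π - θ) = π - H θ)
    (hsuper : ∀ θ₁ θ₂ : ℝ, θ₁ ∈ Icc (0:ℝ) π → θ₂ ∈ Icc (0:ℝ) π →
      θ₁ + θ₂ ∈ Icc (0:ℝ) π → H θ₁ + H θ₂ ≤ H (θ₁ + θ₂)) :
    0 ≤ ∫ θ in (0:ℝ)..π, (cos (H θ + θ) - cos (2 * θ)) := by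
  have hφ : Continuous fun p : ℝ × ℝ => cos (p.1 + p.2) - cos (2 * p.2) := by fun_prop
  have hhalf : Icc 0 (π / 2) ⊆ Icc 0 π := Icc_subset_Icc_right (by linarith [pi_pos])
  rw [integral_eq_two_mul_integral_half_of_symm pi_pos.le
    (hmono.intervalIntegrable_comp pi_pos.le hφ), zero_add]
  · refine mul_nonneg zero_le_two (integral_nonneg_of_add_symm_nonneg (by positivity)
      ((hmono.mono hhalf).intervalIntegrable_comp (by positivity) hφ) fun θ hθ => ?_)
    simpa only [zero_add] using cos_add_sub_cos_two_mul_add_reflect_nonneg hmaps hsym hsuper hθ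
  · intro θ hθ
    rw [zero_add, hsym θ hθ, show π - H θ + (π - θ) = 2 * π - (H θ + θ) by ring,
      show 2 * (π - θ) = 2 * π - 2 * θ by ring, cos_two_pi_sub, cos_two_pi_sub]

end

theorem stmt_17 (H : ℝ → ℝ)
    (hmaps : Set.MapsTo H (Set.Icc 0 π) (Set.Icc 0 π))
    (hmono : MonotoneOn H (Set.Icc 0 π))
    (hsym : ∀ θ ∈ Set.Icc (0:ℝ) π, H (π - θ) = π - H θ)
    (hsuper : ∀ θ₁ θ₂ : ℝ, θ₁ ∈ Set.Icc (0:ℝ) π → θ₂ ∈ Set.Icc (0:ℝ) π →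
      θ₁ + θ₂ ∈ Set.Icc (0:ℝ) π → H θ₁ + H θ₂ ≤ H (θ₁ + θ₂))
    (hjensen : ∀ F : ℝ → ℝ, ConvexOn ℝ (Set.Icc 0 π) F →
      (∫ θ in (0:ℝ)..π, F (H θ) * Real.sin θ) ≤ ∫ θ in (0:ℝ)..π, F θ * Real.sin θ) :
    ∀ θ ∈ Set.Icc (0:ℝ) π, H θ = θ := by
  have hint := hmono.intervalIntegrable_comp pi_pos.le
    (φ := fun p => 1 - cos (p.1 - p.2)) (by fun_prop)
  have hzero : ∫ θ in (0:ℝ)..π, (1 - cos (H θ - θ)) = 0 :=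
    le_antisymm (by linarith [integral_one_sub_cos_add_integral_cos_sub_cos_nonpos hmono hjensen,
        integral_cos_add_sub_cos_two_mul_nonneg hmaps hmono hsym hsuper])
      (intervalIntegral.integral_nonneg pi_pos.le fun θ _ => sub_nonneg.2 (cos_le_one _))
  have hclose : ∀ θ ∈ Ioc 0 π, |H θ - θ| < 2 * π := fun θ hθ => by
    have hHθ := hmaps (Ioc_subset_Icc_self hθ)
    rw [abs_lt]
    constructor <;> linarith [hHθ.1, hHθ.2, hθ.1, hθ.2, pi_pos]
  have hid := hmono.eqOn_id_of_ae
    (ae_eq_of_integral_one_sub_cos_sub_eq_zero pi_pos.le hint hclose hzero)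
  have hH0 := apply_zero_eq_zero_of_superadditive hmaps hsuper
  intro θ hθ
  rcases eq_endpoints_or_mem_Ioo_of_mem_Icc hθ with rfl | rfl | hθ
  · exact hH0
  · simpa [hH0] using hsym 0 (left_mem_Icc.2 pi_pos.le)
  · exact hid hθ
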